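/- arXiv:1008.3821 — 4 statements merged into one kernel-verified Lean document; each statement's English description precedes it below -/
import Mathlib

section
/- Every oriented-convex n-gon (n ≥ 3) in the hyperbolic plane has positive signed area, and every collinear n-gon has signed area zero; i.e. if z₁,…,zₙ ∈ ℍ is oriented-convex then F(z₁,…,zₙ) > 0, and if z₁,…,zₙ are collinear then F(z₁,…,zₙ) = 0. -/
open Real Finset

noncomputable section

/-- Points of `ℝ³`. -/
abbrev V3 : Type := Fin 3 → ℝ

/-- The pseudo-Euclidean scalar product `⟨x,y⟩ = x₀y₀ − x₁y₁ − x₂y₂`. -/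
def pscal (x y : V3) : ℝ := x 0 * y 0 - x 1 * y 1 - x 2 * y 2

/-- The hyperboloid model `ℍ` of the hyperbolic plane. -/
def Hyp : Set V3 := {x | pscal x x = 1 ∧ 0 < x 0}

/-- Inverse hyperbolic cosine. -/
def arcoshR (x : ℝ) : ℝ := Real.log (x + Real.sqrt (x ^ 2 - 1))

/-- Hyperbolic distance `d(a,b) = arcosh ⟨a,b⟩`. -/
def dH (a b : V3) : ℝ := arcoshR (pscal a b)

/-- Determinant of the 3×3 matrix with columns `a`, `b`, `c`. -/
def det3 (a b c : V3) : ℝ :=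
  a 0 * (b 1 * c 2 - b 2 * c 1) - b 0 * (a 1 * c 2 - a 2 * c 1) + c 0 * (a 1 * b 2 - a 2 * b 1)

/-- `S_ab = sinh(d(a,b)/2)`. -/
def SS (a b : V3) : ℝ := Real.sinh (dH a b / 2)

/-- Signed area of the triangle `a b c`. -/
def triArea (a b c : V3) : ℝ :=
  2 * Real.arctan (det3 a b c / (pscal a b + pscal b c + pscal c a + 1))

/-- Signed area of the `n`-gon with vertices `z 1, …, z n`. -/
def polyArea (n : ℕ) (z : ℕ → V3) : ℝ :=
  ∑ k ∈ Finset.Ico 2 n, triArea (z 1) (z k) (z (k + 1))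

/-- Cyclic successor on `{1, …, n}`. -/
def nxt (n k : ℕ) : ℕ := k % n + 1

/-- Oriented convexity of the `n`-gon `z 1, …, z n`. -/
def OrientedConvex (n : ℕ) (z : ℕ → V3) : Prop :=
  ∀ k ∈ Finset.Icc 1 n, ∀ j ∈ Finset.Icc 1 n,
    j ≠ k → j ≠ nxt n k → 0 < det3 (z k) (z (nxt n k)) (z j)

/-- A set of points lies in a common 2-dimensional linear subspace of `ℝ³`. -/
def Collin (s : Set V3) : Prop :=
  ∃ W : Submodule ℝ V3, Module.finrank ℝ W = 2 ∧ ∀ x ∈ s, x ∈ W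

/-- A set of points lies in a common affine plane of `ℝ³` not containing the origin. -/
def Cocyc (s : Set V3) : Prop :=
  ∃ u : V3, ∃ p : ℝ, u ≠ 0 ∧ p ≠ 0 ∧ ∀ x ∈ s, pscal u x = p

/-! The area of a fan triangle `z₁ z_k z_{k+1}` is `2 arctan(det / (positive denominator))`, since
`⟨a,b⟩ ≥ 1` on `ℍ` (reverse Cauchy–Schwarz). Its sign is therefore the sign of
`[z₁, z_k, z_{k+1}]`, which is positive for an oriented-convex polygon and zero when all vertices lie
in a plane through the origin. -/

lemma one_le_pscal_of_mem_Hyp {a b : V3} (ha : a ∈ Hyp) (hb : b ∈ Hyp) : 1 ≤ pscal a b := by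
  obtain ⟨ha1, ha0⟩ := ha
  obtain ⟨hb1, hb0⟩ := hb
  unfold pscal at *
  nlinarith [sq_nonneg (a 1 * b 2 - a 2 * b 1), sq_nonneg (a 0 - b 0), sq_nonneg (a 0 + b 0),
    mul_pos ha0 hb0, sq_nonneg (a 1 * b 0 - a 0 * b 1), sq_nonneg (a 2 * b 0 - a 0 * b 2)]

lemma det3_rotate (a b c : V3) : det3 a b c = det3 b c a := by
  unfold det3; ring

lemma det3_eq_det (a b c : V3) : det3 a b c = (Matrix.of ![a, b, c]).det := by
  rw [Matrix.det_fin_three]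
  simp only [det3, Matrix.of_apply, Matrix.cons_val_zero, Matrix.cons_val_one,
    Matrix.cons_val_two, Matrix.head_cons, Matrix.tail_cons]
  ring

lemma det3_eq_zero_of_finrank_lt {W : Submodule ℝ V3} (hW : Module.finrank ℝ W < 3)
    {a b c : V3} (ha : a ∈ W) (hb : b ∈ W) (hc : c ∈ W) : det3 a b c = 0 := by
  by_contra h
  have hli : LinearIndependent ℝ ![a, b, c] :=
    Matrix.linearIndependent_rows_of_det_ne_zero (A := Matrix.of ![a, b, c]) (det3_eq_det a b c ▸ h)
  have hspan : Submodule.span ℝ (Set.range ![a, b, c]) ≤ W := by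
    rw [Submodule.span_le]
    rintro _ ⟨i, rfl⟩
    fin_cases i <;> assumption
  have := Submodule.finrank_mono hspan
  rw [finrank_span_eq_card hli, Fintype.card_fin] at this
  omega

lemma triArea_pos {a b c : V3} (ha : a ∈ Hyp) (hb : b ∈ Hyp) (hc : c ∈ Hyp)
    (hdet : 0 < det3 a b c) : 0 < triArea a b c := by
  have hden : 0 < pscal a b + pscal b c + pscal c a + 1 := by
    linarith [one_le_pscal_of_mem_Hyp ha hb, one_le_pscal_of_mem_Hyp hb hc,
      one_le_pscal_of_mem_Hyp hc ha]
  have := Real.arctan_strictMono (div_pos hdet hden)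
  rw [Real.arctan_zero] at this
  unfold triArea
  linarith

lemma triArea_eq_zero {a b c : V3} (hdet : det3 a b c = 0) : triArea a b c = 0 := by
  rw [triArea, hdet, zero_div, Real.arctan_zero, mul_zero]

lemma OrientedConvex.det3_fan_pos {n : ℕ} {z : ℕ → V3} (hc : OrientedConvex n z) {k : ℕ}
    (h2k : 2 ≤ k) (hkn : k < n) : 0 < det3 (z 1) (z k) (z (k + 1)) := by
  have hnxt : nxt n k = k + 1 := by rw [nxt, Nat.mod_eq_of_lt hkn]
  have := hc k (mem_Icc.2 ⟨by omega, by omega⟩) 1 (mem_Icc.2 ⟨le_rfl, by omega⟩) (by omega)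
    (by omega)
  rwa [hnxt, ← det3_rotate] at this

/-- Lemma 2.1: every oriented-convex `n`-gon has positive signed area, and every
collinear `n`-gon has signed area zero. -/
theorem orientedConvex_area_pos_and_collinear_area_zero
    (n : ℕ) (hn : 3 ≤ n) (z : ℕ → V3)
    (hz : ∀ k ∈ Finset.Icc 1 n, z k ∈ Hyp) :
    (OrientedConvex n z → 0 < polyArea n z) ∧
    (Collin (z '' Set.Icc 1 n) → polyArea n z = 0) := by
  have hmem : ∀ {k}, 1 ≤ k → k ≤ n → z k ∈ Hyp := fun h1 h2 => hz _ (mem_Icc.2 ⟨h1, h2⟩)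
  constructor
  · intro hc
    refine sum_pos (fun k hk => ?_) (nonempty_Ico.2 (by omega))
    obtain ⟨h2k, hkn⟩ := mem_Ico.1 hk
    exact triArea_pos (hmem le_rfl (by omega)) (hmem (by omega) hkn.le) (hmem (by omega) hkn)
      (hc.det3_fan_pos h2k hkn)
  · rintro ⟨W, hW, hWmem⟩
    have hzW : ∀ {k}, 1 ≤ k → k ≤ n → z k ∈ W := fun h1 h2 => hWmem _ ⟨_, ⟨h1, h2⟩, rfl⟩
    refine sum_eq_zero (fun k hk => triArea_eq_zero ?_)
    obtain ⟨h2k, hkn⟩ := mem_Ico.1 hk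
    exact det3_eq_zero_of_finrank_lt (by omega) (hzW le_rfl (by omega)) (hzW (by omega) hkn.le)
      (hzW (by omega) hkn)
end
end

section
/- For any a,b,c ∈ ℍ let u := a ⋉ b + b ⋉ c + c ⋉ a. Then: (i) ⟨u,a⟩ = ⟨u,b⟩ = ⟨u,c⟩ = [a,b,c] (so if a,b,c are not collinear, the affine plane spanned by a,b,c has equation ⟨u,x⟩ = [a,b,c], with u ≠ 0); (ii) ⟨u,u⟩ = 8(S_ab²S_bc² + S_bc²S_ca² + S_ca²S_ab²) − 4(S_ab⁴ + S_bc⁴ + S_ca⁴) = 4(S_ab+S_bc+S_ca)(S_ab+S_bc−S_ca)(S_bc+S_ca−S_ab)(S_ca+S_ab−S_bc); (iii) [a,b,c]² = 16·S_ab²·S_bc²·S_ca² + ⟨u,u⟩. -/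
open Real Finset

noncomputable section

/-- `a ⋉ b`: the unique vector of `ℝ³` with `⟨a ⋉ b, x⟩ = [a,b,x]` for all `x ∈ ℝ³`. -/
def pcross (a b : V3) : V3 :=
  ![a 1 * b 2 - a 2 * b 1, a 0 * b 2 - a 2 * b 0, a 1 * b 0 - a 0 * b 1]


namespace CircumplaneAux

lemma key_uu (a b c : V3) (hA : pscal a a = 1) (hB : pscal b b = 1) (hC : pscal c c = 1) :
    pscal (pcross a b + pcross b c + pcross c a) (pcross a b + pcross b c + pcross c a)
      = 2 * (pscal a b * pscal b c + pscal b c * pscal c a + pscal c a * pscal a b)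
        - (pscal a b ^ 2 + pscal b c ^ 2 + pscal c a ^ 2)
        - 2 * (pscal a b + pscal b c + pscal c a) + 3 := by
  have hA' : a 0 * a 0 - a 1 * a 1 - a 2 * a 2 = 1 := hA
  have hB' : b 0 * b 0 - b 1 * b 1 - b 2 * b 2 = 1 := hB
  have hC' : c 0 * c 0 - c 1 * c 1 - c 2 * c 2 = 1 := hC
  simp only [pscal, pcross, Pi.add_apply, Matrix.cons_val_zero, Matrix.cons_val_one,
    Matrix.head_cons, Matrix.cons_val_two, Matrix.tail_cons]
  linear_combination ((-1)*c 2*c 2 + (-1)*c 1*c 1 + c 0*c 0 + (2)*b 2*c 2 + (-1)*b 2*b 2 + (2)*b 1*c 1 + (-1)*b 1*b 1 + (-2)*b 0*c 0 + b 0*b 0) * hA'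
    + ((1) + (-1)*c 2*c 2 + (-1)*c 1*c 1 + c 0*c 0 + (2)*a 2*c 2 + (2)*a 1*c 1 + (-2)*a 0*c 0) * hB'
    + ((2) + (2)*a 2*b 2 + (2)*a 1*b 1 + (-2)*a 0*b 0) * hC'

lemma key_det (a b c : V3) (hA : pscal a a = 1) (hB : pscal b b = 1) (hC : pscal c c = 1) :
    det3 a b c ^ 2 = 2 * pscal a b * pscal b c * pscal c a
      - (pscal a b ^ 2 + pscal b c ^ 2 + pscal c a ^ 2) + 1 := by
  have hA' : a 0 * a 0 - a 1 * a 1 - a 2 * a 2 = 1 := hA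
  have hB' : b 0 * b 0 - b 1 * b 1 - b 2 * b 2 = 1 := hB
  have hC' : c 0 * c 0 - c 1 * c 1 - c 2 * c 2 = 1 := hC
  simp only [det3, pscal]
  linear_combination (c 0*c 0 + b 2*b 2*c 1*c 1 + (-2)*b 1*b 2*c 1*c 2 + b 1*b 1*c 2*c 2 + (2)*b 0*b 2*c 0*c 2 + (2)*b 0*b 1*c 0*c 1 + b 0*b 0 + (-2)*b 0*b 0*c 0*c 0) * hA'
    + ((1) + (-1)*c 0*c 0 + a 2*a 2 + a 2*a 2*c 1*c 1 + (-2)*a 2*a 2*c 0*c 0 + (-2)*a 1*a 2*c 1*c 2 + a 1*a 1 + a 1*a 1*c 2*c 2 + (-2)*a 1*a 1*c 0*c 0 + (2)*a 0*a 2*c 0*c 2 + (2)*a 0*a 1*c 0*c 1) * hB'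
    + ((-1)*b 2*b 2 + (-1)*b 1*b 1 + (-1)*a 2*a 2 + (-2)*a 2*a 2*b 2*b 2 + (-1)*a 2*a 2*b 1*b 1 + (-2)*a 1*a 2*b 1*b 2 + (-1)*a 1*a 1 + (-1)*a 1*a 1*b 2*b 2 + (-2)*a 1*a 1*b 1*b 1 + (2)*a 0*a 2*b 0*b 2 + (2)*a 0*a 1*b 0*b 1) * hC'

lemma key_ua (a b c : V3) :
    pscal (pcross a b + pcross b c + pcross c a) a = det3 a b c := by
  simp only [pscal, pcross, Pi.add_apply, Matrix.cons_val_zero, Matrix.cons_val_one,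
    Matrix.head_cons, Matrix.cons_val_two, Matrix.tail_cons, det3]
  ring

lemma key_ub (a b c : V3) :
    pscal (pcross a b + pcross b c + pcross c a) b = det3 a b c := by
  simp only [pscal, pcross, Pi.add_apply, Matrix.cons_val_zero, Matrix.cons_val_one,
    Matrix.head_cons, Matrix.cons_val_two, Matrix.tail_cons, det3]
  ring

lemma key_uc (a b c : V3) :
    pscal (pcross a b + pcross b c + pcross c a) c = det3 a b c := by
  simp only [pscal, pcross, Pi.add_apply, Matrix.cons_val_zero, Matrix.cons_val_one,
    Matrix.head_cons, Matrix.cons_val_two, Matrix.tail_cons, det3]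
  ring

lemma one_le_pscal {a b : V3} (ha : a ∈ Hyp) (hb : b ∈ Hyp) : 1 ≤ pscal a b := by
  obtain ⟨ha1, ha0⟩ := ha
  obtain ⟨hb1, hb0⟩ := hb
  have ha1' : a 0 * a 0 - a 1 * a 1 - a 2 * a 2 = 1 := ha1
  have hb1' : b 0 * b 0 - b 1 * b 1 - b 2 * b 2 = 1 := hb1
  show 1 ≤ a 0 * b 0 - a 1 * b 1 - a 2 * b 2
  nlinarith [sq_nonneg (a 1 * b 2 - a 2 * b 1), sq_nonneg (a 1 - b 1), sq_nonneg (a 2 - b 2),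
    mul_pos ha0 hb0, sq_nonneg (a 0 - b 0), sq_nonneg (a 0 * b 0 - 1), sq_nonneg (a 1 + b 1),
    sq_nonneg (a 2 + b 2), sq_nonneg (a 0 + b 0)]

lemma sinh_arcosh_half_sq {x : ℝ} (hx : 1 ≤ x) :
    Real.sinh (arcoshR x / 2) ^ 2 = (x - 1) / 2 := by
  set s := Real.sqrt (x ^ 2 - 1) with hs
  have hs0 : 0 ≤ s := Real.sqrt_nonneg _
  have hs2 : s ^ 2 = x ^ 2 - 1 := Real.sq_sqrt (by nlinarith)
  have hy : 0 < x + s := by linarith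
  have h2 : (x - s) * (x + s) = 1 := by nlinarith
  have hinv : (x + s)⁻¹ = x - s := (eq_inv_of_mul_eq_one_left h2).symm
  have hcosh : Real.cosh (arcoshR x) = x := by
    rw [arcoshR, Real.cosh_log hy, hinv]; ring
  have ht := Real.cosh_two_mul (arcoshR x / 2)
  rw [show 2 * (arcoshR x / 2) = arcoshR x by ring, hcosh, Real.cosh_sq] at ht
  linarith

lemma SS_sq {a b : V3} (ha : a ∈ Hyp) (hb : b ∈ Hyp) :
    SS a b ^ 2 = (pscal a b - 1) / 2 :=
  sinh_arcosh_half_sq (one_le_pscal ha hb)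

lemma step_plane (S : Submodule ℝ V3) (h : Module.finrank ℝ S < 2) :
    ∃ S' : Submodule ℝ V3, S ≤ S' ∧ Module.finrank ℝ S' = Module.finrank ℝ S + 1 := by
  have hV : Module.finrank ℝ V3 = 3 := Module.finrank_fin_fun ℝ
  obtain ⟨m, hm⟩ := S.exists_of_finrank_lt (by omega)
  have hmS : m ∉ S := by simpa using hm 1 one_ne_zero
  have hm0 : m ≠ 0 := fun h0 => hmS (h0 ▸ S.zero_mem)
  refine ⟨S ⊔ ℝ ∙ m, le_sup_left, ?_⟩
  have hlt : S < S ⊔ ℝ ∙ m := lt_of_le_of_ne le_sup_left (fun he => hmS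
    (he ▸ Submodule.mem_sup_right (Submodule.mem_span_singleton_self m)))
  have h1 : Module.finrank ℝ S < Module.finrank ℝ (S ⊔ ℝ ∙ m : Submodule ℝ V3) :=
    Submodule.finrank_lt_finrank_of_lt hlt
  have h2 : Module.finrank ℝ (S ⊔ ℝ ∙ m : Submodule ℝ V3)
      ≤ Module.finrank ℝ S + Module.finrank ℝ (ℝ ∙ m : Submodule ℝ V3) := by
    have := Submodule.finrank_sup_add_finrank_inf_eq S (ℝ ∙ m)
    omega
  rw [finrank_span_singleton hm0] at h2
  omega

lemma exists_plane (S : Submodule ℝ V3) (h : Module.finrank ℝ S ≤ 2) :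
    ∃ W : Submodule ℝ V3, S ≤ W ∧ Module.finrank ℝ W = 2 := by
  rcases eq_or_lt_of_le h with h' | h'
  · exact ⟨S, le_rfl, h'⟩
  obtain ⟨S1, hS1, hr1⟩ := step_plane S h'
  rcases Nat.lt_or_ge (Module.finrank ℝ S1) 2 with h2 | h2
  · obtain ⟨S2, hS2, hr2⟩ := step_plane S1 h2
    exact ⟨S2, hS1.trans hS2, by omega⟩
  · exact ⟨S1, hS1, by omega⟩

lemma collin_of_cross_zero {a b c : V3}
    (h : pcross a b + pcross b c + pcross c a = 0) : Collin {a, b, c} := by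
  have h0 := congrFun h 0
  have h1 := congrFun h 1
  have h2 := congrFun h 2
  simp only [pcross, Pi.add_apply, Matrix.cons_val_zero, Matrix.cons_val_one,
    Matrix.head_cons, Matrix.cons_val_two, Matrix.tail_cons, Pi.zero_apply] at h0 h1 h2
  set x : V3 := a - c with hx
  set y : V3 := b - c with hy
  have e0 : x 1 * y 2 - x 2 * y 1 = 0 := by
    simp only [hx, hy, Pi.sub_apply]; linear_combination h0
  have e1 : x 0 * y 2 - x 2 * y 0 = 0 := by
    simp only [hx, hy, Pi.sub_apply]; linear_combination h1
  have e2 : x 1 * y 0 - x 0 * y 1 = 0 := by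
    simp only [hx, hy, Pi.sub_apply]; linear_combination h2
  have key : ∃ v w : V3, a ∈ Submodule.span ℝ {v, w} ∧ b ∈ Submodule.span ℝ {v, w}
      ∧ c ∈ Submodule.span ℝ {v, w} := by
    by_cases hx0 : x = 0
    · refine ⟨c, y, ?_, ?_, ?_⟩
      · have : a = c := by rwa [hx, sub_eq_zero] at hx0
        exact this ▸ Submodule.subset_span (by simp)
      · have : b = c + y := by simp [hy]
        rw [this]
        exact Submodule.add_mem _ (Submodule.subset_span (by simp))
          (Submodule.subset_span (by simp))
      · exact Submodule.subset_span (by simp)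
    · obtain ⟨j, hj⟩ : ∃ j, x j ≠ 0 := by
        by_contra hc
        push_neg at hc
        exact hx0 (funext fun i => hc i)
      have E01 : y 0 * x 1 = y 1 * x 0 := by linear_combination e2
      have E02 : y 0 * x 2 = y 2 * x 0 := by linear_combination -e1
      have E12 : y 1 * x 2 = y 2 * x 1 := by linear_combination -e0
      have E : ∀ i j : Fin 3, y i * x j = y j * x i := by
        intro i j
        obtain ⟨iv, hi⟩ := i
        obtain ⟨jv, hj2⟩ := j
        interval_cases iv <;> interval_cases jv <;>
          first | exact E01 | exact E01.symm | exact E02 | exact E02.symm | exact E12 | exact E12.symm | ring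
      have hyt : y = (y j / x j) • x := by
        funext i
        have key2 : y i * x j = y j * x i := E i j
        simp only [Pi.smul_apply, smul_eq_mul]
        field_simp
        linear_combination key2
      refine ⟨c, x, ?_, ?_, ?_⟩
      · have : a = c + x := by simp [hx]
        rw [this]
        exact Submodule.add_mem _ (Submodule.subset_span (by simp))
          (Submodule.subset_span (by simp))
      · have : b = c + (y j / x j) • x := by rw [← hyt]; simp [hy]
        rw [this]
        exact Submodule.add_mem _ (Submodule.subset_span (by simp))
          (Submodule.smul_mem _ _ (Submodule.subset_span (by simp)))
      · exact Submodule.subset_span (by simp)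
  obtain ⟨v, w, hav, hbv, hcv⟩ := key
  have hle : Module.finrank ℝ (Submodule.span ℝ {v, w} : Submodule ℝ V3) ≤ 2 := by
    have := finrank_span_le_card (R := ℝ) ({v, w} : Set V3)
    refine this.trans ?_
    simp [Set.toFinset_insert]
    exact Finset.card_insert_le _ _ |>.trans (by simp)
  obtain ⟨W, hW, hW2⟩ := exists_plane _ hle
  exact ⟨W, hW2, by rintro z (rfl | rfl | rfl) <;> [exact hW hav; exact hW hbv; exact hW hcv]⟩

end CircumplaneAux

/-- Lemma 3.1: properties of the pseudo-Euclidean normal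
`u = a ⋉ b + b ⋉ c + c ⋉ a` of the plane through `a`, `b`, `c`. -/
theorem circumplane_normal (a b c : V3) (ha : a ∈ Hyp) (hb : b ∈ Hyp) (hc : c ∈ Hyp)
    (u : V3) (hu : u = pcross a b + pcross b c + pcross c a) :
    (pscal u a = det3 a b c ∧ pscal u b = det3 a b c ∧ pscal u c = det3 a b c) ∧
    (¬ Collin {a, b, c} → u ≠ 0) ∧
    pscal u u =
      8 * (SS a b ^ 2 * SS b c ^ 2 + SS b c ^ 2 * SS c a ^ 2 + SS c a ^ 2 * SS a b ^ 2)
      - 4 * (SS a b ^ 4 + SS b c ^ 4 + SS c a ^ 4) ∧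
    pscal u u =
      4 * (SS a b + SS b c + SS c a) * (SS a b + SS b c - SS c a) *
        (SS b c + SS c a - SS a b) * (SS c a + SS a b - SS b c) ∧
    det3 a b c ^ 2 = 16 * SS a b ^ 2 * SS b c ^ 2 * SS c a ^ 2 + pscal u u := by
  subst hu
  have hP := CircumplaneAux.one_le_pscal ha hb
  have hQ := CircumplaneAux.one_le_pscal hb hc
  have hR := CircumplaneAux.one_le_pscal hc ha
  have e1 : SS a b ^ 2 = (pscal a b - 1) / 2 := CircumplaneAux.SS_sq ha hb
  have e2 : SS b c ^ 2 = (pscal b c - 1) / 2 := CircumplaneAux.SS_sq hb hc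
  have e3 : SS c a ^ 2 = (pscal c a - 1) / 2 := CircumplaneAux.SS_sq hc ha
  have e1' : SS a b ^ 4 = ((pscal a b - 1) / 2) ^ 2 := by rw [← e1]; ring
  have e2' : SS b c ^ 4 = ((pscal b c - 1) / 2) ^ 2 := by rw [← e2]; ring
  have e3' : SS c a ^ 4 = ((pscal c a - 1) / 2) ^ 2 := by rw [← e3]; ring
  have hii : pscal (pcross a b + pcross b c + pcross c a)
        (pcross a b + pcross b c + pcross c a)
      = 8 * (SS a b ^ 2 * SS b c ^ 2 + SS b c ^ 2 * SS c a ^ 2 + SS c a ^ 2 * SS a b ^ 2)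
        - 4 * (SS a b ^ 4 + SS b c ^ 4 + SS c a ^ 4) := by
    rw [CircumplaneAux.key_uu a b c ha.1 hb.1 hc.1, e1, e2, e3, e1', e2', e3']
    ring
  refine ⟨⟨CircumplaneAux.key_ua a b c, CircumplaneAux.key_ub a b c,
    CircumplaneAux.key_uc a b c⟩, ?_, hii, by rw [hii]; ring, ?_⟩
  · exact fun hnc h0 => hnc (CircumplaneAux.collin_of_cross_zero h0)
  · rw [CircumplaneAux.key_det a b c ha.1 hb.1 hc.1, hii, e1, e2, e3, e1', e2', e3']
    ring
end
end

section
/- 17-identity: for any points a,b,c,e ∈ ℍ, writing K_xy := ⟨x,y⟩ for x,y ∈ {a,b,c,e}, one has 0 = K_ab²K_ce² + K_ac²K_be² + K_ae²K_bc² − 2K_abK_acK_beK_ce − 2K_abK_aeK_bcK_ce − 2K_acK_aeK_bcK_be + 2K_abK_acK_bc + 2K_abK_aeK_be + 2K_acK_aeK_ce + 2K_bcK_beK_ce − K_ab² − K_ac² − K_ae² − K_bc² − K_be² − K_ce² + 1. -/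
open Real Finset

noncomputable section

/-- Lemma 3.3 (17-identity) for four points of `ℍ`. -/
theorem seventeen_identity (a b c e : V3)
    (ha : a ∈ Hyp) (hb : b ∈ Hyp) (hc : c ∈ Hyp) (he : e ∈ Hyp) :
    0 = pscal a b ^ 2 * pscal c e ^ 2 + pscal a c ^ 2 * pscal b e ^ 2
      + pscal a e ^ 2 * pscal b c ^ 2
      - 2 * pscal a b * pscal a c * pscal b e * pscal c e
      - 2 * pscal a b * pscal a e * pscal b c * pscal c e
      - 2 * pscal a c * pscal a e * pscal b c * pscal b e
      + 2 * pscal a b * pscal a c * pscal b c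
      + 2 * pscal a b * pscal a e * pscal b e
      + 2 * pscal a c * pscal a e * pscal c e
      + 2 * pscal b c * pscal b e * pscal c e
      - pscal a b ^ 2 - pscal a c ^ 2 - pscal a e ^ 2
      - pscal b c ^ 2 - pscal b e ^ 2 - pscal c e ^ 2 + 1 := by
  have ha1 := ha.1
  have hb1 := hb.1
  have hc1 := hc.1
  have he1 := he.1
  simp only [Hyp, Set.mem_setOf_eq, pscal] at ha1 hb1 hc1 he1
  simp only [pscal]
  linear_combination (1 - (c 0 * e 0 - c 1 * e 1 - c 2 * e 2)^2 - (b 0 * c 0 - b 1 * c 1 - b 2 * c 2)^2 - (b 0 * e 0 - b 1 * e 1 - b 2 * e 2)^2 + 2*(b 0 * c 0 - b 1 * c 1 - b 2 * c 2)*(b 0 * e 0 - b 1 * e 1 - b 2 * e 2)*(c 0 * e 0 - c 1 * e 1 - c 2 * e 2)) * ha1 + ((a 0 * a 0 - a 1 * a 1 - a 2 * a 2) - (a 0 * a 0 - a 1 * a 1 - a 2 * a 2)*(c 0 * e 0 - c 1 * e 1 - c 2 * e 2)^2 - (a 0 * c 0 - a 1 * c 1 - a 2 * c 2)^2 + 2*(a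 0 * c 0 - a 1 * c 1 - a 2 * c 2)*(a 0 * e 0 - a 1 * e 1 - a 2 * e 2)*(c 0 * e 0 - c 1 * e 1 - c 2 * e 2) - (a 0 * e 0 - a 1 * e 1 - a 2 * e 2)^2) * hb1 + ((a 0 * a 0 - a 1 * a 1 - a 2 * a 2)*(b 0 * b 0 - b 1 * b 1 - b 2 * b 2) - (a 0 * a 0 - a 1 * a 1 - a 2 * a 2)*(b 0 * e 0 - b 1 * e 1 - b 2 * e 2)^2 - (a 0 * b 0 - a 1 * b 1 - a 2 * b 2)^2 + 2*(a 0 * b 0 - a 1 * b 1 - a 2 * b 2)*(a 0 * e 0 - a 1 * e 1 - a 2 * e 2)*(b 0 * e 0 - b 1 * e 1 - b 2 * e 2) - (b 0 * b 0 - b 1 * b 1 - b 2 * b 2)*(a 0 * e 0 - a 1 * e 1 - a 2 * e 2)^2) * hc1 + ((a 0 * a 0 - a 1 * a 1 - a 2 * a 2)*(b 0 * b 0 - b 1 * b 1 - b 2 * b 2)*(c 0 * c 0 - c 1 * c 1 - c 2 * c 2) - (a 0 * a 0 - a 1 * a 1 - a 2 * a 2)*(b 0 * c 0 - b 1 * c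 1 - b 2 * c 2)^2 - (c 0 * c 0 - c 1 * c 1 - c 2 * c 2)*(a 0 * b 0 - a 1 * b 1 - a 2 * b 2)^2 + 2*(a 0 * b 0 - a 1 * b 1 - a 2 * b 2)*(a 0 * c 0 - a 1 * c 1 - a 2 * c 2)*(b 0 * c 0 - b 1 * c 1 - b 2 * c 2) - (b 0 * b 0 - b 1 * b 1 - b 2 * b 2)*(a 0 * c 0 - a 1 * c 1 - a 2 * c 2)^2) * he1
end
end

section
/- If the non-collinear points a,b,c,e ∈ ℍ are cocyclic, then at least one of the following two equations is valid: (S_ab·S_bc + S_ae·S_ce)·S_ac² = (S_ab·S_ce + S_ae·S_bc)·(S_ab·S_ae + S_bc·S_ce), or −(S_ab·S_bc − S_ae·S_ce)·S_ac² = (S_ab·S_ce − S_ae·S_bc)·(S_ab·S_ae − S_bc·S_ce). -/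
open Real Finset

set_option maxHeartbeats 4000000

noncomputable section

/-- Euclidean dot product on `ℝ³`. -/
def dot3 (x y : V3) : ℝ := x 0 * y 0 + x 1 * y 1 + x 2 * y 2

lemma det4_dot (x0 x1 x2 x3 w0 w1 w2 w3 : V3) :
    dot3 x0 w0 * (dot3 x1 w1 * (dot3 x2 w2 * dot3 x3 w3 - dot3 x2 w3 * dot3 x3 w2) - dot3 x1 w2 * (dot3 x2 w1 * dot3 x3 w3 - dot3 x2 w3 * dot3 x3 w1) + dot3 x1 w3 * (dot3 x2 w1 * dot3 x3 w2 - dot3 x2 w2 * dot3 x3 w1)) - dot3 x0 w1 * (dot3 x1 w0 * (dot3 x2 w2 * dot3 x3 w3 - dot3 x2 w3 * dot3 x3 w2) - dot3 x1 w2 * (dot3 x2 w0 * dot3 x3 w3 - dot3 x2 w3 * dot3 x3 w0) + dot3 x1 w3 * (dot3 x2 w0 * dot3 x3 w2 - dot3 x2 w2 * dot3 x3 w0)) + dot3 x0 w2 * (dot3 x1 w0 * (dot3 x2 w1 * dot3 x3 w3 - dot3 x2 w3 * dot3 x3 w1) - dot3 x1 w1 * (dot3 x2 w0 * dot3 x3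 w3 - dot3 x2 w3 * dot3 x3 w0) + dot3 x1 w3 * (dot3 x2 w0 * dot3 x3 w1 - dot3 x2 w1 * dot3 x3 w0)) - dot3 x0 w3 * (dot3 x1 w0 * (dot3 x2 w1 * dot3 x3 w2 - dot3 x2 w2 * dot3 x3 w1) - dot3 x1 w1 * (dot3 x2 w0 * dot3 x3 w2 - dot3 x2 w2 * dot3 x3 w0) + dot3 x1 w2 * (dot3 x2 w0 * dot3 x3 w1 - dot3 x2 w1 * dot3 x3 w0)) = 0 := by
  simp only [dot3]; ring

/-- auxiliary vector so that `dot3 x (wA y) = pscal x y`. -/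
def wA (y : V3) : V3 := ![y 0, -(y 1), -(y 2)]

lemma dot_wA (x y : V3) : dot3 x (wA y) = pscal x y := by
  simp [dot3, wA, pscal]; ring

/-- auxiliary vector so that `dot3 x (wB u p y) = p^2 * pscal x y - pscal u x * pscal u y`. -/
def wB (u : V3) (p : ℝ) (y : V3) : V3 :=
  ![p ^ 2 * y 0 - pscal u y * u 0, pscal u y * u 1 - p ^ 2 * y 1, pscal u y * u 2 - p ^ 2 * y 2]

lemma dot_wB (u : V3) (p : ℝ) (x y : V3) :
    dot3 x (wB u p y) = p ^ 2 * pscal x y - pscal u x * pscal u y := by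
  simp [dot3, wB, pscal]; ring

lemma psymm (x y : V3) : pscal x y = pscal y x := by
  simp only [pscal]; ring

lemma pscal_ge_one {x y : V3} (hx : x ∈ Hyp) (hy : y ∈ Hyp) : 1 ≤ pscal x y := by
  obtain ⟨hx1, hx0⟩ := hx
  obtain ⟨hy1, hy0⟩ := hy
  simp only [pscal] at hx1 hy1 ⊢
  have hx2 : 1 ≤ x 0 := by nlinarith [sq_nonneg (x 1), sq_nonneg (x 2)]
  have hy2 : 1 ≤ y 0 := by nlinarith [sq_nonneg (y 1), sq_nonneg (y 2)]
  have hcs : (x 1 * y 1 + x 2 * y 2) ^ 2 ≤ (x 0 ^ 2 - 1) * (y 0 ^ 2 - 1) := by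
    nlinarith [sq_nonneg (x 1 * y 2 - x 2 * y 1)]
  have hxy1 : 1 ≤ x 0 * y 0 := by nlinarith
  nlinarith [hcs, hxy1, sq_nonneg (x 0 - y 0)]

lemma pscal_eq_one {x y : V3} (hx : x ∈ Hyp) (hy : y ∈ Hyp) (h : pscal x y = 1) : x = y := by
  obtain ⟨hx1, hx0⟩ := hx
  obtain ⟨hy1, hy0⟩ := hy
  simp only [pscal] at hx1 hy1 h
  have hx2 : 1 ≤ x 0 := by nlinarith [sq_nonneg (x 1), sq_nonneg (x 2)]
  have hsq : (x 0 - y 0) ^ 2 ≤ 0 := by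
    nlinarith [sq_nonneg (x 1 * (x 2 - y 2) - x 2 * (x 1 - y 1)), hx2, hx0, hy0]
  have hsq0 : (x 0 - y 0) ^ 2 = 0 := le_antisymm hsq (sq_nonneg _)
  have h0 : x 0 = y 0 := by
    have := pow_eq_zero_iff (n := 2) (by norm_num) |>.mp hsq0
    linarith
  have h12 : (x 1 - y 1) ^ 2 + (x 2 - y 2) ^ 2 = 0 := by
    linear_combination (x 0 - y 0) * h0 - hx1 - hy1 + 2 * h
  have h1 : x 1 = y 1 := by
    have e1 : (x 1 - y 1) ^ 2 = 0 :=
      le_antisymm (by linarith [sq_nonneg (x 2 - y 2)]) (sq_nonneg _)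
    have := pow_eq_zero_iff (n := 2) (by norm_num) |>.mp e1
    linarith
  have h2 : x 2 = y 2 := by
    have e2 : (x 2 - y 2) ^ 2 = 0 :=
      le_antisymm (by linarith [sq_nonneg (x 1 - y 1)]) (sq_nonneg _)
    have := pow_eq_zero_iff (n := 2) (by norm_num) |>.mp e2
    linarith
  funext i
  fin_cases i <;> assumption

lemma SS_sq {x y : V3} (hx : x ∈ Hyp) (hy : y ∈ Hyp) : pscal x y = 2 * SS x y ^ 2 + 1 := by
  have hq := pscal_ge_one hx hy
  have hs : Real.sqrt (pscal x y ^ 2 - 1) ^ 2 = pscal x y ^ 2 - 1 :=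
    Real.sq_sqrt (by nlinarith)
  have hpos : 0 < pscal x y + Real.sqrt (pscal x y ^ 2 - 1) := by
    have := Real.sqrt_nonneg (pscal x y ^ 2 - 1); linarith
  have hmul : (pscal x y - Real.sqrt (pscal x y ^ 2 - 1)) *
      (pscal x y + Real.sqrt (pscal x y ^ 2 - 1)) = 1 := by nlinarith [hs]
  have hcosh : Real.cosh (dH x y) = pscal x y := by
    unfold dH arcoshR
    rw [Real.cosh_eq, Real.exp_log hpos, Real.exp_neg, Real.exp_log hpos,
      inv_eq_of_mul_eq_one_left hmul]
    ring
  have h2 : Real.cosh (2 * (dH x y / 2)) =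
      Real.cosh (dH x y / 2) ^ 2 + Real.sinh (dH x y / 2) ^ 2 := Real.cosh_two_mul _
  have h3 : Real.cosh (dH x y / 2) ^ 2 = Real.sinh (dH x y / 2) ^ 2 + 1 := Real.cosh_sq _
  have h4 : 2 * (dH x y / 2) = dH x y := by ring
  rw [h4, hcosh] at h2
  unfold SS
  linarith [h3, h2]

/-- Corollary 3.6: if the non-collinear points `a, b, c, e` are cocyclic then at least
one of the two diagonal equations holds. -/
theorem cocyclic_diagonal_equations (a b c e : V3)
    (ha : a ∈ Hyp) (hb : b ∈ Hyp) (hc : c ∈ Hyp) (he : e ∈ Hyp)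
    (hnc : ¬ Collin {a, b, c, e}) (hcyc : Cocyc {a, b, c, e}) :
    (SS a b * SS b c + SS a e * SS c e) * SS a c ^ 2 =
      (SS a b * SS c e + SS a e * SS b c) * (SS a b * SS a e + SS b c * SS c e) ∨
    -(SS a b * SS b c - SS a e * SS c e) * SS a c ^ 2 =
      (SS a b * SS c e - SS a e * SS b c) * (SS a b * SS a e - SS b c * SS c e) := by
  obtain ⟨u, p, hu0, hp0, hup⟩ := hcyc
  have hua : pscal u a = p := hup a (by simp)
  have hub : pscal u b = p := hup b (by simp)
  have huc : pscal u c = p := hup c (by simp)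
  have hue : pscal u e = p := hup e (by simp)
  have haa := ha.1
  have hbb := hb.1
  have hcc := hc.1
  have hee := he.1
  -- determinant of the Gram matrix vanishes
  have hA0 : pscal a a * (pscal b b * (pscal c c * pscal e e - pscal c e * pscal c e) - pscal b c * (pscal b c * pscal e e - pscal c e * pscal b e) + pscal b e * (pscal b c * pscal c e - pscal c c * pscal b e)) - pscal a b * (pscal a b * (pscal c c * pscal e e - pscal c e * pscal c e) - pscal b c * (pscal a c * pscal e e - pscal c e * pscal a e) + pscal b e * (pscal a c * pscal c e - pscal c c * pscal a e)) + pscal a c * (pscal a b * (pscal b c * pscal e e - pscal c e * pscal b e) - pscal b b * (pscal a c * pscal e e - pscal c e * pscal a e) + pscal b e * (pscal a c * pscal b e - pscal b c * pscal a e)) - pscal a e * (pscal a b * (pscal b c * pscal c e - pscal c c * pscal b e) - pscal b b * (pscal a c * pscal c e - pscal c c * pscal a e) + pscal b c * (pscal a c * pscal b e - pscal b c * pscal a e)) = 0 := by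
    have h := det4_dot a b c e (wA a) (wA b) (wA c) (wA e)
    simp only [dot_wA] at h
    rw [psymm b a, psymm c a, psymm c b, psymm e a, psymm e b, psymm e c] at h
    linear_combination h
  rw [haa, hbb, hcc, hee] at hA0
  have hA : ((1 : ℝ) +
      (-1 : ℝ) * pscal c e ^ 2 +
      (-1 : ℝ) * pscal b e ^ 2 +
      (2 : ℝ) * pscal b c * pscal b e * pscal c e +
      (-1 : ℝ) * pscal b c ^ 2 +
      (-1 : ℝ) * pscal a e ^ 2 +
      (1 : ℝ) * pscal a e ^ 2 * pscal b c ^ 2 +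
      (2 : ℝ) * pscal a c * pscal a e * pscal c e +
      (-2 : ℝ) * pscal a c * pscal a e * pscal b c * pscal b e +
      (-1 : ℝ) * pscal a c ^ 2 +
      (1 : ℝ) * pscal a c ^ 2 * pscal b e ^ 2 +
      (2 : ℝ) * pscal a b * pscal a e * pscal b e +
      (-2 : ℝ) * pscal a b * pscal a e * pscal b c * pscal c e +
      (-2 : ℝ) * pscal a b * pscal a c * pscal b e * pscal c e +
      (2 : ℝ) * pscal a b * pscal a c * pscal b c +
      (-1 : ℝ) * pscal a b ^ 2 +
      (1 : ℝ) * pscal a b ^ 2 * pscal c e ^ 2) = 0 := by linear_combination hA0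
  -- determinant of the translated Gram matrix vanishes (cocyclicity)
  have hB0 : (p ^ 2 * pscal a a - pscal u a * pscal u a) * ((p ^ 2 * pscal b b - pscal u b * pscal u b) * ((p ^ 2 * pscal c c - pscal u c * pscal u c) * (p ^ 2 * pscal e e - pscal u e * pscal u e) - (p ^ 2 * pscal c e - pscal u c * pscal u e) * (p ^ 2 * pscal c e - pscal u e * pscal u c)) - (p ^ 2 * pscal b c - pscal u b * pscal u c) * ((p ^ 2 * pscal b c - pscal u c * pscal u b) * (p ^ 2 * pscal e e - pscal u e * pscal u e) - (p ^ 2 * pscal c e - pscal u c * pscal u e) * (p ^ 2 * pscal b e - pscal u e * pscal u b)) + (p ^ 2 * pscal b e - pscal u b * pscal u e) * ((p ^ 2 * pscal b c - pscal u c * pscal u b) * (p ^ 2 * pscal c e - pscal u e * pscal u c) - (p ^ 2 * pscal c c - pscal u c * pscal u c) * (p ^ 2 * pscal b e - pscal u e * pscal u b))) - (p ^ 2 * pscal a b - pscal u a * pscal u b) * ((p ^ 2 * pscal a b - pscal u b * pscal u a) * ((p ^ 2 * pscal c c - pscal u c * pscal u c) * (p ^ 2 * pscal e e - pscal u e * pscal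 u e) - (p ^ 2 * pscal c e - pscal u c * pscal u e) * (p ^ 2 * pscal c e - pscal u e * pscal u c)) - (p ^ 2 * pscal b c - pscal u b * pscal u c) * ((p ^ 2 * pscal a c - pscal u c * pscal u a) * (p ^ 2 * pscal e e - pscal u e * pscal u e) - (p ^ 2 * pscal c e - pscal u c * pscal u e) * (p ^ 2 * pscal a e - pscal u e * pscal u a)) + (p ^ 2 * pscal b e - pscal u b * pscal u e) * ((p ^ 2 * pscal a c - pscal u c * pscal u a) * (p ^ 2 * pscal c e - pscal u e * pscal u c) - (p ^ 2 * pscal c c - pscal u c * pscal u c) * (p ^ 2 * pscal a e - pscal u e * pscal u a))) + (p ^ 2 * pscal a c - pscal u a * pscal u c) * ((p ^ 2 * pscal a b - pscal u b * pscal u a) * ((p ^ 2 * pscal b c - pscal u c * pscal u b) * (p ^ 2 * pscal e e - pscal u e * pscal u e) - (p ^ 2 * pscal c e - pscal u c * pscal u e) * (p ^ 2 * pscal b e - pscal u e * pscal u b)) - (p ^ 2 * pscal b b - pscal u b * pscal u b) * ((p ^ 2 * pscal a c - pscal u c * pscal u a) * (p ^ 2 * pscal e e - pscal u e * pscal u e)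 - (p ^ 2 * pscal c e - pscal u c * pscal u e) * (p ^ 2 * pscal a e - pscal u e * pscal u a)) + (p ^ 2 * pscal b e - pscal u b * pscal u e) * ((p ^ 2 * pscal a c - pscal u c * pscal u a) * (p ^ 2 * pscal b e - pscal u e * pscal u b) - (p ^ 2 * pscal b c - pscal u c * pscal u b) * (p ^ 2 * pscal a e - pscal u e * pscal u a))) - (p ^ 2 * pscal a e - pscal u a * pscal u e) * ((p ^ 2 * pscal a b - pscal u b * pscal u a) * ((p ^ 2 * pscal b c - pscal u c * pscal u b) * (p ^ 2 * pscal c e - pscal u e * pscal u c) - (p ^ 2 * pscal c c - pscal u c * pscal u c) * (p ^ 2 * pscal b e - pscal u e * pscal u b)) - (p ^ 2 * pscal b b - pscal u b * pscal u b) * ((p ^ 2 * pscal a c - pscal u c * pscal u a) * (p ^ 2 * pscal c e - pscal u e * pscal u c) - (p ^ 2 * pscal c c - pscal u c * pscal u c) * (p ^ 2 * pscal a e - pscal u e * pscal u a)) + (p ^ 2 * pscal b c - pscal u b * pscal u c) * ((p ^ 2 * pscal a c - pscal u c * pscal u a) * (p ^ 2 * pscal b e - pscal u e * pscal u b) - (p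 ^ 2 * pscal b c - pscal u c * pscal u b) * (p ^ 2 * pscal a e - pscal u e * pscal u a))) = 0 := by
    have h := det4_dot a b c e (wB u p a) (wB u p b) (wB u p c) (wB u p e)
    simp only [dot_wB] at h
    rw [psymm b a, psymm c a, psymm c b, psymm e a, psymm e b, psymm e c] at h
    linear_combination h
  rw [hua, hub, huc, hue] at hB0
  have hB1 : p ^ 8 * ((pscal a a - 1) * ((pscal b b - 1) * ((pscal c c - 1) * (pscal e e - 1) - (pscal c e - 1) * (pscal c e - 1)) - (pscal b c - 1) * ((pscal b c - 1) * (pscal e e - 1) - (pscal c e - 1) * (pscal b e - 1)) + (pscal b e - 1) * ((pscal b c - 1) * (pscal c e - 1) - (pscal c c - 1) * (pscal b e - 1))) - (pscal a b - 1) * ((pscal a b - 1) * ((pscal c c - 1) * (pscal e e - 1) - (pscal c e - 1) * (pscal c e - 1)) - (pscal b c - 1) * ((pscal a c - 1) * (pscal e e - 1) - (pscal c e - 1) * (pscal a e - 1)) + (pscal b e - 1) * ((pscal a c - 1) * (pscal c e - 1) - (pscal c c - 1) * (pscal a e - 1))) + (pscal a c - 1) * ((pscal a b - 1) * ((pscal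 b c - 1) * (pscal e e - 1) - (pscal c e - 1) * (pscal b e - 1)) - (pscal b b - 1) * ((pscal a c - 1) * (pscal e e - 1) - (pscal c e - 1) * (pscal a e - 1)) + (pscal b e - 1) * ((pscal a c - 1) * (pscal b e - 1) - (pscal b c - 1) * (pscal a e - 1))) - (pscal a e - 1) * ((pscal a b - 1) * ((pscal b c - 1) * (pscal c e - 1) - (pscal c c - 1) * (pscal b e - 1)) - (pscal b b - 1) * ((pscal a c - 1) * (pscal c e - 1) - (pscal c c - 1) * (pscal a e - 1)) + (pscal b c - 1) * ((pscal a c - 1) * (pscal b e - 1) - (pscal b c - 1) * (pscal a e - 1)))) = 0 := by linear_combination hB0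
  have hBd : ((pscal a a - 1) * ((pscal b b - 1) * ((pscal c c - 1) * (pscal e e - 1) - (pscal c e - 1) * (pscal c e - 1)) - (pscal b c - 1) * ((pscal b c - 1) * (pscal e e - 1) - (pscal c e - 1) * (pscal b e - 1)) + (pscal b e - 1) * ((pscal b c - 1) * (pscal c e - 1) - (pscal c c - 1) * (pscal b e - 1))) - (pscal a b - 1) * ((pscal a b - 1) * ((pscal c c - 1) * (pscal e e - 1) - (pscal c e - 1) * (pscal c e - 1)) - (pscal b c - 1) * ((pscal a c - 1) * (pscal e e - 1) - (pscal c e - 1) * (pscal a e - 1)) + (pscal b e - 1) * ((pscal a c - 1) * (pscal c e - 1) - (pscal c c - 1) * (pscal a e - 1))) + (pscal a c - 1) * ((pscal a b - 1) * ((pscal b c - 1) * (pscal e e - 1) - (pscal c e - 1) * (pscal b e - 1)) - (pscal b b - 1) * ((pscal a c - 1) * (pscal e e - 1) - (pscal c e - 1) * (pscal a e - 1)) + (pscal b e - 1) * ((pscal a c - 1) * (pscal b e - 1) - (pscal b c - 1) * (pscal a e - 1))) - (pscal a e - 1) * ((pscal a b - 1) * ((pscal b c - 1) * (pscal c e - 1)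 - (pscal c c - 1) * (pscal b e - 1)) - (pscal b b - 1) * ((pscal a c - 1) * (pscal c e - 1) - (pscal c c - 1) * (pscal a e - 1)) + (pscal b c - 1) * ((pscal a c - 1) * (pscal b e - 1) - (pscal b c - 1) * (pscal a e - 1)))) = 0 := by
    rcases mul_eq_zero.mp hB1 with h | h
    · exact absurd h (pow_ne_zero 8 hp0)
    · exact h
  rw [haa, hbb, hcc, hee] at hBd
  have hB : ((-3 : ℝ) +
      (2 : ℝ) * pscal c e +
      (1 : ℝ) * pscal c e ^ 2 +
      (2 : ℝ) * pscal b e +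
      (-2 : ℝ) * pscal b e * pscal c e +
      (1 : ℝ) * pscal b e ^ 2 +
      (2 : ℝ) * pscal b c +
      (-2 : ℝ) * pscal b c * pscal c e +
      (-2 : ℝ) * pscal b c * pscal b e +
      (1 : ℝ) * pscal b c ^ 2 +
      (2 : ℝ) * pscal a e +
      (-2 : ℝ) * pscal a e * pscal c e +
      (-2 : ℝ) * pscal a e * pscal b e +
      (2 : ℝ) * pscal a e * pscal b c * pscal c e +
      (2 : ℝ) * pscal a e * pscal b c * pscal b e +
      (-2 : ℝ) * pscal a e * pscal b c ^ 2 +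
      (1 : ℝ) * pscal a e ^ 2 +
      (-2 : ℝ) * pscal a e ^ 2 * pscal b c +
      (1 : ℝ) * pscal a e ^ 2 * pscal b c ^ 2 +
      (2 : ℝ) * pscal a c +
      (-2 : ℝ) * pscal a c * pscal c e +
      (2 : ℝ) * pscal a c * pscal b e * pscal c e +
      (-2 : ℝ) * pscal a c * pscal b e ^ 2 +
      (-2 : ℝ) * pscal a c * pscal b c +
      (2 : ℝ) * pscal a c * pscal b c * pscal b e +
      (-2 : ℝ) * pscal a c * pscal a e +
      (2 : ℝ) * pscal a c * pscal a e * pscal b e +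
      (2 : ℝ) * pscal a c * pscal a e * pscal b c +
      (-2 : ℝ) * pscal a c * pscal a e * pscal b c * pscal b e +
      (1 : ℝ) * pscal a c ^ 2 +
      (-2 : ℝ) * pscal a c ^ 2 * pscal b e +
      (1 : ℝ) * pscal a c ^ 2 * pscal b e ^ 2 +
      (2 : ℝ) * pscal a b +
      (-2 : ℝ) * pscal a b * pscal c e ^ 2 +
      (-2 : ℝ) * pscal a b * pscal b e +
      (2 : ℝ) * pscal a b * pscal b e * pscal c e +
      (-2 : ℝ) * pscal a b * pscal b c +
      (2 : ℝ) * pscal a b * pscal b c * pscal c e +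
      (-2 : ℝ) * pscal a b * pscal a e +
      (2 : ℝ) * pscal a b * pscal a e * pscal c e +
      (2 : ℝ) * pscal a b * pscal a e * pscal b c +
      (-2 : ℝ) * pscal a b * pscal a e * pscal b c * pscal c e +
      (-2 : ℝ) * pscal a b * pscal a c +
      (2 : ℝ) * pscal a b * pscal a c * pscal c e +
      (2 : ℝ) * pscal a b * pscal a c * pscal b e +
      (-2 : ℝ) * pscal a b * pscal a c * pscal b e * pscal c e +
      (1 : ℝ) * pscal a b ^ 2 +
      (-2 : ℝ) * pscal a b ^ 2 * pscal c e +
      (1 : ℝ) * pscal a b ^ 2 * pscal c e ^ 2) = 0 := by linear_combination hBd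
  have hge : 1 ≤ pscal a c := pscal_ge_one ha hc
  rcases eq_or_lt_of_le hge with heq | hlt
  · -- degenerate case a = c
    have hac : a = c := pscal_eq_one ha hc heq.symm
    right
    have hS0 : SS a c = 0 := by
      have h1 : arcoshR (pscal a c) = 0 := by
        rw [← heq]
        simp [arcoshR]
      simp [SS, dH, h1]
    have h1 : SS b c = SS a b := by
      rw [← hac]
      simp only [SS, dH]
      rw [show pscal b a = pscal a b from psymm b a]
    have h2 : SS c e = SS a e := by rw [← hac]
    rw [hS0, h1, h2]; ring
  · have hsab : pscal a b = 2 * SS a b ^ 2 + 1 := SS_sq ha hb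
    have hsac : pscal a c = 2 * SS a c ^ 2 + 1 := SS_sq ha hc
    have hsae : pscal a e = 2 * SS a e ^ 2 + 1 := SS_sq ha he
    have hsbc : pscal b c = 2 * SS b c ^ 2 + 1 := SS_sq hb hc
    have hsbe : pscal b e = 2 * SS b e ^ 2 + 1 := SS_sq hb he
    have hsce : pscal c e = 2 * SS c e ^ 2 + 1 := SS_sq hc he
    rw [hsab, hsac, hsae, hsbc, hsbe, hsce] at hA hB
    have hSne : SS a c ≠ 0 := by
      intro h0
      rw [hsac, h0] at hlt
      norm_num at hlt
    have h16 : (16 * SS a c ^ 2 : ℝ) ≠ 0 :=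
      mul_ne_zero (by norm_num) (pow_ne_zero 2 hSne)
    have hfac : (SS a b * SS c e + SS a c * SS b e + SS a e * SS b c) *
        ((SS a b * SS c e - SS a c * SS b e + SS a e * SS b c) *
        ((SS a b * SS c e + SS a c * SS b e - SS a e * SS b c) *
        (-(SS a b * SS c e) + SS a c * SS b e + SS a e * SS b c))) = 0 := by
      linear_combination (-1/16 : ℝ) * hB
    rcases mul_eq_zero.mp hfac with h | hfac2
    · have hkey : (16 * SS a c ^ 2) *
          ((SS a b * SS b c + SS a e * SS c e) * SS a c ^ 2 -
            (SS a b * SS c e + SS a e * SS b c) * (SS a b * SS a e + SS b c * SS c e)) ^ 2 = 0 := by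
        linear_combination SS a c ^ 4 * hA - ((-16 : ℝ) * SS a c ^ 2 * SS a e * SS b c ^ 3 * SS c e ^ 2 +
              (16 : ℝ) * SS a c ^ 3 * SS b c ^ 2 * SS b e * SS c e ^ 2 +
              (16 : ℝ) * SS a c ^ 4 * SS a e * SS b c * SS c e ^ 2 +
              (-16 : ℝ) * SS a c ^ 4 * SS a e * SS b c * SS b e ^ 2 +
              (16 : ℝ) * SS a c ^ 4 * SS a e * SS b c ^ 3 +
              (16 : ℝ) * SS a c ^ 4 * SS a e ^ 3 * SS b c +
              (16 : ℝ) * SS a c ^ 4 * SS a e ^ 3 * SS b c ^ 3 +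
              (-16 : ℝ) * SS a c ^ 5 * SS b e * SS c e ^ 2 +
              (16 : ℝ) * SS a c ^ 5 * SS b e ^ 3 +
              (-16 : ℝ) * SS a c ^ 5 * SS b c ^ 2 * SS b e +
              (-16 : ℝ) * SS a c ^ 5 * SS a e ^ 2 * SS b e +
              (-16 : ℝ) * SS a c ^ 5 * SS a e ^ 2 * SS b c ^ 2 * SS b e +
              (-16 : ℝ) * SS a c ^ 6 * SS a e * SS b c +
              (-16 : ℝ) * SS a c ^ 6 * SS a e * SS b c * SS b e ^ 2 +
              (16 : ℝ) * SS a c ^ 7 * SS b e +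
              (16 : ℝ) * SS a c ^ 7 * SS b e ^ 3 +
              (-16 : ℝ) * SS a b * SS a c ^ 2 * SS b c ^ 2 * SS c e ^ 3 +
              (-32 : ℝ) * SS a b * SS a c ^ 2 * SS a e ^ 2 * SS b c ^ 2 * SS c e +
              (32 : ℝ) * SS a b * SS a c ^ 3 * SS a e * SS b c * SS b e * SS c e +
              (16 : ℝ) * SS a b * SS a c ^ 4 * SS c e ^ 3 +
              (-16 : ℝ) * SS a b * SS a c ^ 4 * SS b e ^ 2 * SS c e +
              (16 : ℝ) * SS a b * SS a c ^ 4 * SS b c ^ 2 * SS c e +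
              (16 : ℝ) * SS a b * SS a c ^ 4 * SS a e ^ 2 * SS c e +
              (-16 : ℝ) * SS a b * SS a c ^ 4 * SS a e ^ 2 * SS b c ^ 2 * SS c e +
              (32 : ℝ) * SS a b * SS a c ^ 5 * SS a e * SS b c * SS b e * SS c e +
              (-16 : ℝ) * SS a b * SS a c ^ 6 * SS c e +
              (-16 : ℝ) * SS a b * SS a c ^ 6 * SS b e ^ 2 * SS c e +
              (-32 : ℝ) * SS a b ^ 2 * SS a c ^ 2 * SS a e * SS b c * SS c e ^ 2 +
              (-16 : ℝ) * SS a b ^ 2 * SS a c ^ 2 * SS a e ^ 3 * SS b c +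
              (16 : ℝ) * SS a b ^ 2 * SS a c ^ 3 * SS a e ^ 2 * SS b e +
              (16 : ℝ) * SS a b ^ 2 * SS a c ^ 4 * SS a e * SS b c +
              (-16 : ℝ) * SS a b ^ 2 * SS a c ^ 4 * SS a e * SS b c * SS c e ^ 2 +
              (-16 : ℝ) * SS a b ^ 2 * SS a c ^ 5 * SS b e +
              (-16 : ℝ) * SS a b ^ 2 * SS a c ^ 5 * SS b e * SS c e ^ 2 +
              (-16 : ℝ) * SS a b ^ 3 * SS a c ^ 2 * SS a e ^ 2 * SS c e +
              (16 : ℝ) * SS a b ^ 3 * SS a c ^ 4 * SS c e +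
              (16 : ℝ) * SS a b ^ 3 * SS a c ^ 4 * SS c e ^ 3) * h
      have hE := pow_eq_zero_iff (n := 2) (by norm_num) |>.mp
        ((mul_eq_zero.mp hkey).resolve_left h16)
      left; linear_combination hE
    · rcases mul_eq_zero.mp hfac2 with h | hfac3
      · have hkey : (16 * SS a c ^ 2) *
            ((SS a b * SS b c + SS a e * SS c e) * SS a c ^ 2 -
              (SS a b * SS c e + SS a e * SS b c) * (SS a b * SS a e + SS b c * SS c e)) ^ 2 = 0 := by
          linear_combination SS a c ^ 4 * hA - ((-16 : ℝ) * SS a c ^ 2 * SS a e * SS b c ^ 3 * SS c e ^ 2 +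
                (-16 : ℝ) * SS a c ^ 3 * SS b c ^ 2 * SS b e * SS c e ^ 2 +
                (16 : ℝ) * SS a c ^ 4 * SS a e * SS b c * SS c e ^ 2 +
                (-16 : ℝ) * SS a c ^ 4 * SS a e * SS b c * SS b e ^ 2 +
                (16 : ℝ) * SS a c ^ 4 * SS a e * SS b c ^ 3 +
                (16 : ℝ) * SS a c ^ 4 * SS a e ^ 3 * SS b c +
                (16 : ℝ) * SS a c ^ 4 * SS a e ^ 3 * SS b c ^ 3 +
                (16 : ℝ) * SS a c ^ 5 * SS b e * SS c e ^ 2 +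
                (-16 : ℝ) * SS a c ^ 5 * SS b e ^ 3 +
                (16 : ℝ) * SS a c ^ 5 * SS b c ^ 2 * SS b e +
                (16 : ℝ) * SS a c ^ 5 * SS a e ^ 2 * SS b e +
                (16 : ℝ) * SS a c ^ 5 * SS a e ^ 2 * SS b c ^ 2 * SS b e +
                (-16 : ℝ) * SS a c ^ 6 * SS a e * SS b c +
                (-16 : ℝ) * SS a c ^ 6 * SS a e * SS b c * SS b e ^ 2 +
                (-16 : ℝ) * SS a c ^ 7 * SS b e +
                (-16 : ℝ) * SS a c ^ 7 * SS b e ^ 3 +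
                (-16 : ℝ) * SS a b * SS a c ^ 2 * SS b c ^ 2 * SS c e ^ 3 +
                (-32 : ℝ) * SS a b * SS a c ^ 2 * SS a e ^ 2 * SS b c ^ 2 * SS c e +
                (-32 : ℝ) * SS a b * SS a c ^ 3 * SS a e * SS b c * SS b e * SS c e +
                (16 : ℝ) * SS a b * SS a c ^ 4 * SS c e ^ 3 +
                (-16 : ℝ) * SS a b * SS a c ^ 4 * SS b e ^ 2 * SS c e +
                (16 : ℝ) * SS a b * SS a c ^ 4 * SS b c ^ 2 * SS c e +
                (16 : ℝ) * SS a b * SS a c ^ 4 * SS a e ^ 2 * SS c e +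
                (-16 : ℝ) * SS a b * SS a c ^ 4 * SS a e ^ 2 * SS b c ^ 2 * SS c e +
                (-32 : ℝ) * SS a b * SS a c ^ 5 * SS a e * SS b c * SS b e * SS c e +
                (-16 : ℝ) * SS a b * SS a c ^ 6 * SS c e +
                (-16 : ℝ) * SS a b * SS a c ^ 6 * SS b e ^ 2 * SS c e +
                (-32 : ℝ) * SS a b ^ 2 * SS a c ^ 2 * SS a e * SS b c * SS c e ^ 2 +
                (-16 : ℝ) * SS a b ^ 2 * SS a c ^ 2 * SS a e ^ 3 * SS b c +
                (-16 : ℝ) * SS a b ^ 2 * SS a c ^ 3 * SS a e ^ 2 * SS b e +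
                (16 : ℝ) * SS a b ^ 2 * SS a c ^ 4 * SS a e * SS b c +
                (-16 : ℝ) * SS a b ^ 2 * SS a c ^ 4 * SS a e * SS b c * SS c e ^ 2 +
                (16 : ℝ) * SS a b ^ 2 * SS a c ^ 5 * SS b e +
                (16 : ℝ) * SS a b ^ 2 * SS a c ^ 5 * SS b e * SS c e ^ 2 +
                (-16 : ℝ) * SS a b ^ 3 * SS a c ^ 2 * SS a e ^ 2 * SS c e +
                (16 : ℝ) * SS a b ^ 3 * SS a c ^ 4 * SS c e +
                (16 : ℝ) * SS a b ^ 3 * SS a c ^ 4 * SS c e ^ 3) * h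
        have hE := pow_eq_zero_iff (n := 2) (by norm_num) |>.mp
          ((mul_eq_zero.mp hkey).resolve_left h16)
        left; linear_combination hE
      · rcases mul_eq_zero.mp hfac3 with h | h
        · have hkey : (16 * SS a c ^ 2) *
              (-(SS a b * SS b c - SS a e * SS c e) * SS a c ^ 2 -
                (SS a b * SS c e - SS a e * SS b c) * (SS a b * SS a e - SS b c * SS c e)) ^ 2 = 0 := by
            linear_combination SS a c ^ 4 * hA - ((16 : ℝ) * SS a c ^ 2 * SS a e * SS b c ^ 3 * SS c e ^ 2 +
                  (16 : ℝ) * SS a c ^ 3 * SS b c ^ 2 * SS b e * SS c e ^ 2 +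
                  (-16 : ℝ) * SS a c ^ 4 * SS a e * SS b c * SS c e ^ 2 +
                  (16 : ℝ) * SS a c ^ 4 * SS a e * SS b c * SS b e ^ 2 +
                  (-16 : ℝ) * SS a c ^ 4 * SS a e * SS b c ^ 3 +
                  (-16 : ℝ) * SS a c ^ 4 * SS a e ^ 3 * SS b c +
                  (-16 : ℝ) * SS a c ^ 4 * SS a e ^ 3 * SS b c ^ 3 +
                  (-16 : ℝ) * SS a c ^ 5 * SS b e * SS c e ^ 2 +
                  (16 : ℝ) * SS a c ^ 5 * SS b e ^ 3 +
                  (-16 : ℝ) * SS a c ^ 5 * SS b c ^ 2 * SS b e +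
                  (-16 : ℝ) * SS a c ^ 5 * SS a e ^ 2 * SS b e +
                  (-16 : ℝ) * SS a c ^ 5 * SS a e ^ 2 * SS b c ^ 2 * SS b e +
                  (16 : ℝ) * SS a c ^ 6 * SS a e * SS b c +
                  (16 : ℝ) * SS a c ^ 6 * SS a e * SS b c * SS b e ^ 2 +
                  (16 : ℝ) * SS a c ^ 7 * SS b e +
                  (16 : ℝ) * SS a c ^ 7 * SS b e ^ 3 +
                  (-16 : ℝ) * SS a b * SS a c ^ 2 * SS b c ^ 2 * SS c e ^ 3 +
                  (-32 : ℝ) * SS a b * SS a c ^ 2 * SS a e ^ 2 * SS b c ^ 2 * SS c e +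
                  (-32 : ℝ) * SS a b * SS a c ^ 3 * SS a e * SS b c * SS b e * SS c e +
                  (16 : ℝ) * SS a b * SS a c ^ 4 * SS c e ^ 3 +
                  (-16 : ℝ) * SS a b * SS a c ^ 4 * SS b e ^ 2 * SS c e +
                  (16 : ℝ) * SS a b * SS a c ^ 4 * SS b c ^ 2 * SS c e +
                  (16 : ℝ) * SS a b * SS a c ^ 4 * SS a e ^ 2 * SS c e +
                  (-16 : ℝ) * SS a b * SS a c ^ 4 * SS a e ^ 2 * SS b c ^ 2 * SS c e +
                  (-32 : ℝ) * SS a b * SS a c ^ 5 * SS a e * SS b c * SS b e * SS c e +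
                  (-16 : ℝ) * SS a b * SS a c ^ 6 * SS c e +
                  (-16 : ℝ) * SS a b * SS a c ^ 6 * SS b e ^ 2 * SS c e +
                  (32 : ℝ) * SS a b ^ 2 * SS a c ^ 2 * SS a e * SS b c * SS c e ^ 2 +
                  (16 : ℝ) * SS a b ^ 2 * SS a c ^ 2 * SS a e ^ 3 * SS b c +
                  (16 : ℝ) * SS a b ^ 2 * SS a c ^ 3 * SS a e ^ 2 * SS b e +
                  (-16 : ℝ) * SS a b ^ 2 * SS a c ^ 4 * SS a e * SS b c +
                  (16 : ℝ) * SS a b ^ 2 * SS a c ^ 4 * SS a e * SS b c * SS c e ^ 2 +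
                  (-16 : ℝ) * SS a b ^ 2 * SS a c ^ 5 * SS b e +
                  (-16 : ℝ) * SS a b ^ 2 * SS a c ^ 5 * SS b e * SS c e ^ 2 +
                  (-16 : ℝ) * SS a b ^ 3 * SS a c ^ 2 * SS a e ^ 2 * SS c e +
                  (16 : ℝ) * SS a b ^ 3 * SS a c ^ 4 * SS c e +
                  (16 : ℝ) * SS a b ^ 3 * SS a c ^ 4 * SS c e ^ 3) * h
          have hE := pow_eq_zero_iff (n := 2) (by norm_num) |>.mp
            ((mul_eq_zero.mp hkey).resolve_left h16)
          right; linear_combination hE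
        · have hkey : (16 * SS a c ^ 2) *
              (-(SS a b * SS b c - SS a e * SS c e) * SS a c ^ 2 -
                (SS a b * SS c e - SS a e * SS b c) * (SS a b * SS a e - SS b c * SS c e)) ^ 2 = 0 := by
            linear_combination SS a c ^ 4 * hA - ((-16 : ℝ) * SS a c ^ 2 * SS a e * SS b c ^ 3 * SS c e ^ 2 +
                  (16 : ℝ) * SS a c ^ 3 * SS b c ^ 2 * SS b e * SS c e ^ 2 +
                  (16 : ℝ) * SS a c ^ 4 * SS a e * SS b c * SS c e ^ 2 +
                  (-16 : ℝ) * SS a c ^ 4 * SS a e * SS b c * SS b e ^ 2 +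
                  (16 : ℝ) * SS a c ^ 4 * SS a e * SS b c ^ 3 +
                  (16 : ℝ) * SS a c ^ 4 * SS a e ^ 3 * SS b c +
                  (16 : ℝ) * SS a c ^ 4 * SS a e ^ 3 * SS b c ^ 3 +
                  (-16 : ℝ) * SS a c ^ 5 * SS b e * SS c e ^ 2 +
                  (16 : ℝ) * SS a c ^ 5 * SS b e ^ 3 +
                  (-16 : ℝ) * SS a c ^ 5 * SS b c ^ 2 * SS b e +
                  (-16 : ℝ) * SS a c ^ 5 * SS a e ^ 2 * SS b e +
                  (-16 : ℝ) * SS a c ^ 5 * SS a e ^ 2 * SS b c ^ 2 * SS b e +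
                  (-16 : ℝ) * SS a c ^ 6 * SS a e * SS b c +
                  (-16 : ℝ) * SS a c ^ 6 * SS a e * SS b c * SS b e ^ 2 +
                  (16 : ℝ) * SS a c ^ 7 * SS b e +
                  (16 : ℝ) * SS a c ^ 7 * SS b e ^ 3 +
                  (16 : ℝ) * SS a b * SS a c ^ 2 * SS b c ^ 2 * SS c e ^ 3 +
                  (32 : ℝ) * SS a b * SS a c ^ 2 * SS a e ^ 2 * SS b c ^ 2 * SS c e +
                  (-32 : ℝ) * SS a b * SS a c ^ 3 * SS a e * SS b c * SS b e * SS c e +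
                  (-16 : ℝ) * SS a b * SS a c ^ 4 * SS c e ^ 3 +
                  (16 : ℝ) * SS a b * SS a c ^ 4 * SS b e ^ 2 * SS c e +
                  (-16 : ℝ) * SS a b * SS a c ^ 4 * SS b c ^ 2 * SS c e +
                  (-16 : ℝ) * SS a b * SS a c ^ 4 * SS a e ^ 2 * SS c e +
                  (16 : ℝ) * SS a b * SS a c ^ 4 * SS a e ^ 2 * SS b c ^ 2 * SS c e +
                  (-32 : ℝ) * SS a b * SS a c ^ 5 * SS a e * SS b c * SS b e * SS c e +
                  (16 : ℝ) * SS a b * SS a c ^ 6 * SS c e +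
                  (16 : ℝ) * SS a b * SS a c ^ 6 * SS b e ^ 2 * SS c e +
                  (-32 : ℝ) * SS a b ^ 2 * SS a c ^ 2 * SS a e * SS b c * SS c e ^ 2 +
                  (-16 : ℝ) * SS a b ^ 2 * SS a c ^ 2 * SS a e ^ 3 * SS b c +
                  (16 : ℝ) * SS a b ^ 2 * SS a c ^ 3 * SS a e ^ 2 * SS b e +
                  (16 : ℝ) * SS a b ^ 2 * SS a c ^ 4 * SS a e * SS b c +
                  (-16 : ℝ) * SS a b ^ 2 * SS a c ^ 4 * SS a e * SS b c * SS c e ^ 2 +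
                  (-16 : ℝ) * SS a b ^ 2 * SS a c ^ 5 * SS b e +
                  (-16 : ℝ) * SS a b ^ 2 * SS a c ^ 5 * SS b e * SS c e ^ 2 +
                  (16 : ℝ) * SS a b ^ 3 * SS a c ^ 2 * SS a e ^ 2 * SS c e +
                  (-16 : ℝ) * SS a b ^ 3 * SS a c ^ 4 * SS c e +
                  (-16 : ℝ) * SS a b ^ 3 * SS a c ^ 4 * SS c e ^ 3) * h
          have hE := pow_eq_zero_iff (n := 2) (by norm_num) |>.mp
            ((mul_eq_zero.mp hkey).resolve_left h16)
          right; linear_combination hE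
end
end
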